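/- arXiv:2111.05614 — 2 statements merged into one kernel-verified Lean document; each statement's English description precedes it below -/
import Mathlib

section
/- With c₁(κ) = (1/n)⟨Tr A⟩_{exp(κ Tr A)} defined via Haar-measure averages over SO(n,ℝ), one has lim_{κ→∞} c₁(κ) = 1. -/
/-!
Laplace's principle. For `κ ≥ 0` and `ε > 0`, the part of `∫ (n - Tr A) exp (κ Tr A)` where
`Tr A ≤ n - ε` is `O(exp (κ (n - ε)))`, while the normaliser `∫ exp (κ Tr A)` is at least
`exp (κ (n - ε / 2))` times the Haar measure of `{Tr A > n - ε / 2}`, an open neighbourhood of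
the identity and hence of positive measure. So `n - ⟨Tr A⟩_{exp(κ Tr A)} ≤ ε + O(exp (-κ ε / 2))`.
-/

open MeasureTheory Matrix

noncomputable section

/-- A measurable space structure on matrices (the product σ-algebra on entries). -/
instance matMS (n : ℕ) : MeasurableSpace (Matrix (Fin n) (Fin n) ℝ) :=
  (by infer_instance : MeasurableSpace (Fin n → Fin n → ℝ))

/-- The special orthogonal group `SO(n, ℝ)`, as the subgroup of the orthogonal group
consisting of matrices of determinant one. -/
def SOsub (n : ℕ) : Subgroup (Matrix.orthogonalGroup (Fin n) ℝ) where
  carrier := {A | (A : Matrix (Fin n) (Fin n) ℝ).det = 1}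
  one_mem' := by simp
  mul_mem' := by
    intro a b ha hb
    simp only [Set.mem_setOf_eq, Submonoid.coe_mul, Matrix.det_mul] at *
    rw [ha, hb, mul_one]
  inv_mem' := by
    intro a ha
    simp only [Set.mem_setOf_eq] at *
    have h : ((a⁻¹ : Matrix.orthogonalGroup (Fin n) ℝ) : Matrix (Fin n) (Fin n) ℝ)
        = star (a : Matrix (Fin n) (Fin n) ℝ) := rfl
    rw [h, Matrix.star_eq_conjTranspose, Matrix.det_conjTranspose, ha, star_one]

/-- Elements of `SO(n, ℝ)`. -/
abbrev SO (n : ℕ) := SOsub n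

/-- The underlying matrix of an element of `SO(n, ℝ)`. -/
def mat {n : ℕ} (A : SO n) : Matrix (Fin n) (Fin n) ℝ :=
  ((A : Matrix.orthogonalGroup (Fin n) ℝ) : Matrix (Fin n) (Fin n) ℝ)


open Filter Topology Real

instance matBorelSpace (n : ℕ) : BorelSpace (Matrix (Fin n) (Fin n) ℝ) :=
  inferInstanceAs (BorelSpace (Fin n → Fin n → ℝ))

/-- The paper's average `⟨f⟩_{exp(κ f)}`. -/
def gibbsMean {X : Type*} [MeasurableSpace X] (μ : Measure X) (f : X → ℝ) (κ : ℝ) : ℝ :=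
  (∫ x, f x * exp (κ * f x) ∂μ) / ∫ x, exp (κ * f x) ∂μ

section GibbsMean

variable {X : Type*} [MeasurableSpace X] {μ : Measure X} [IsFiniteMeasure μ]
  {f : X → ℝ} {C M : ℝ}

lemma integrable_exp_mul (hf : Measurable f) (hC : ∀ x, |f x| ≤ C) (κ : ℝ) :
    Integrable (fun x => exp (κ * f x)) μ := by
  refine .of_bound (hf.const_mul κ).exp.aestronglyMeasurable (exp (|κ| * C))
    (.of_forall fun x => ?_)
  rw [norm_of_nonneg (exp_pos _).le, exp_le_exp]
  calc κ * f x ≤ |κ * f x| := le_abs_self _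
    _ = |κ| * |f x| := abs_mul _ _
    _ ≤ |κ| * C := by gcongr; exact hC x

lemma integrable_mul_exp_mul (hf : Measurable f) (hC : ∀ x, |f x| ≤ C) {g : X → ℝ} {D : ℝ}
    (hg : Measurable g) (hD : ∀ x, |g x| ≤ D) (κ : ℝ) :
    Integrable (fun x => g x * exp (κ * f x)) μ :=
  (integrable_exp_mul hf hC κ).bdd_mul hg.aestronglyMeasurable (.of_forall hD)

lemma integral_exp_mul_pos [NeZero μ] (hf : Measurable f) (hC : ∀ x, |f x| ≤ C) (κ : ℝ) :
    0 < ∫ x, exp (κ * f x) ∂μ :=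
  integral_exp_pos (integrable_exp_mul hf hC κ)

lemma sub_gibbsMean [NeZero μ] (hf : Measurable f) (hC : ∀ x, |f x| ≤ C) (M κ : ℝ) :
    M - gibbsMean μ f κ =
      (∫ x, (M - f x) * exp (κ * f x) ∂μ) / ∫ x, exp (κ * f x) ∂μ := by
  have hZ := (integral_exp_mul_pos (μ := μ) hf hC κ).ne'
  rw [gibbsMean, eq_div_iff hZ, sub_mul, div_mul_cancel₀ _ hZ, ← integral_const_mul,
    ← integral_sub ((integrable_exp_mul hf hC κ).const_mul M)
      (integrable_mul_exp_mul hf hC hf hC κ)]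
  congr 1 with x
  ring

lemma gibbsMean_le [NeZero μ] (hf : Measurable f) (hC : ∀ x, |f x| ≤ C) (hM : ∀ x, f x ≤ M)
    (κ : ℝ) : gibbsMean μ f κ ≤ M := by
  rw [← sub_nonneg, sub_gibbsMean hf hC M κ]
  exact div_nonneg (integral_nonneg fun x => mul_nonneg (sub_nonneg.2 (hM x)) (exp_pos _).le)
    (integral_exp_mul_pos hf hC κ).le

lemma exp_mul_mul_measureReal_le_integral_exp_mul (hf : Measurable f) (hC : ∀ x, |f x| ≤ C)
    {κ : ℝ} (hκ : 0 ≤ κ) (η : ℝ) :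
    exp (κ * η) * μ.real {x | η < f x} ≤ ∫ x, exp (κ * f x) ∂μ :=
  calc exp (κ * η) * μ.real {x | η < f x} ≤ ∫ x in {x | η < f x}, exp (κ * f x) ∂μ :=
        setIntegral_ge_of_const_le_real (measurableSet_lt measurable_const hf)
          (measure_ne_top _ _) (fun x hx => exp_le_exp.2 (by gcongr; exact le_of_lt hx))
          (integrable_exp_mul hf hC κ).integrableOn
    _ ≤ ∫ x, exp (κ * f x) ∂μ :=
        setIntegral_le_integral (integrable_exp_mul hf hC κ) (.of_forall fun x => (exp_pos _).le)

lemma integral_sub_mul_exp_mul_le (hf : Measurable f) (hC : ∀ x, |f x| ≤ C)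
    (hM : ∀ x, f x ≤ M) {κ ε : ℝ} (hκ : 0 ≤ κ) (hε : 0 ≤ ε) :
    ∫ x, (M - f x) * exp (κ * f x) ∂μ ≤
      ε * ∫ x, exp (κ * f x) ∂μ + μ.real Set.univ * ((M + C) * exp (κ * (M - ε))) := by
  have hMC : ∀ x, M - f x ≤ M + C := fun x => by linarith [neg_abs_le (f x), hC x]
  rw [← integral_const_mul, ← smul_eq_mul (μ.real Set.univ), ← integral_const,
    ← integral_add ((integrable_exp_mul hf hC κ).const_mul ε) (integrable_const _)]
  -- split at the level `M - ε`: above it `M - f < ε`, below it `exp (κ f) ≤ exp (κ (M - ε))`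
  refine integral_mono (integrable_mul_exp_mul hf hC (measurable_const.sub hf)
    (D := |M| + C) (fun x => (abs_sub _ _).trans (by gcongr; exact hC x)) κ)
    (((integrable_exp_mul hf hC κ).const_mul ε).add (integrable_const _)) fun x => ?_
  have hMC₀ : 0 ≤ M + C := (sub_nonneg.2 (hM x)).trans (hMC x)
  by_cases hx : M - ε < f x
  · have : (M - f x) * exp (κ * f x) ≤ ε * exp (κ * f x) := by gcongr; linarith
    have : 0 ≤ (M + C) * exp (κ * (M - ε)) := by positivity
    linarith
  · have : (M - f x) * exp (κ * f x) ≤ (M + C) * exp (κ * (M - ε)) := by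
      gcongr
      · exact hMC x
      · exact not_lt.1 hx
    have : 0 ≤ ε * exp (κ * f x) := by positivity
    linarith

lemma sub_gibbsMean_le [NeZero μ] (hf : Measurable f) (hC : ∀ x, |f x| ≤ C)
    (hM : ∀ x, f x ≤ M) {ε κ : ℝ} (hε : 0 ≤ ε) (hδ : 0 < μ.real {x | M - ε / 2 < f x})
    (hκ : 0 ≤ κ) :
    M - gibbsMean μ f κ ≤
      ε + μ.real Set.univ * (M + C) / μ.real {x | M - ε / 2 < f x} * exp (-(κ * (ε / 2))) := by
  set Z := ∫ x, exp (κ * f x) ∂μ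
  set δ := μ.real {x | M - ε / 2 < f x}
  have hZ : 0 < Z := integral_exp_mul_pos hf hC κ
  have hK : 0 ≤ μ.real Set.univ * (M + C) := by
    obtain ⟨x⟩ := Measure.nonempty_of_neZero μ
    have : 0 ≤ M + C := by linarith [neg_abs_le (f x), hC x, hM x]
    positivity
  rw [sub_gibbsMean hf hC M κ]
  calc (∫ x, (M - f x) * exp (κ * f x) ∂μ) / Z
      ≤ (ε * Z + μ.real Set.univ * ((M + C) * exp (κ * (M - ε)))) / Z := by
        gcongr; exact integral_sub_mul_exp_mul_le hf hC hM hκ hε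
    _ = ε + μ.real Set.univ * (M + C) * exp (κ * (M - ε)) / Z := by
        field_simp
    _ ≤ ε + μ.real Set.univ * (M + C) * exp (κ * (M - ε)) / (exp (κ * (M - ε / 2)) * δ) := by
        gcongr
        exact exp_mul_mul_measureReal_le_integral_exp_mul hf hC hκ _
    _ = ε + μ.real Set.univ * (M + C) / δ * exp (-(κ * (ε / 2))) := by
        rw [show -(κ * (ε / 2)) = κ * (M - ε) - κ * (M - ε / 2) by ring, exp_sub]
        field_simp

theorem tendsto_gibbsMean_atTop (hf : Measurable f) (hC : ∀ x, |f x| ≤ C) (hM : ∀ x, f x ≤ M)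
    (hpos : ∀ ε > 0, 0 < μ {x | M - ε < f x}) :
    Tendsto (gibbsMean μ f) atTop (𝓝 M) := by
  have : NeZero μ := ⟨fun h => by simpa [h] using hpos 1 one_pos⟩
  refine tendsto_order.2 ⟨fun a ha => ?_,
    fun a ha => .of_forall fun κ => (gibbsMean_le hf hC hM κ).trans_lt ha⟩
  set ε := (M - a) / 2
  have hε : 0 < ε := by simp only [ε]; linarith
  have h2ε : M - 2 * ε = a := by simp only [ε]; ring
  have hδ : 0 < μ.real {x | M - ε / 2 < f x} :=
    ENNReal.toReal_pos (hpos _ (by positivity)).ne' (measure_ne_top _ _)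
  have htail : Tendsto (fun κ => μ.real Set.univ * (M + C) / μ.real {x | M - ε / 2 < f x} *
      exp (-(κ * (ε / 2)))) atTop (𝓝 0) := by
    simpa using (tendsto_exp_neg_atTop_nhds_zero.comp
      (tendsto_id.atTop_mul_const (by positivity : 0 < ε / 2))).const_mul
      (μ.real Set.univ * (M + C) / μ.real {x | M - ε / 2 < f x})
  filter_upwards [htail.eventually (gt_mem_nhds hε), eventually_ge_atTop 0] with κ hsmall hκ
  linarith [sub_gibbsMean_le hf hC hM hε.le hδ hκ]

end GibbsMean

lemma norm_trace_le_of_mem_unitaryGroup {𝕜 ι : Type*} [RCLike 𝕜] [Fintype ι] [DecidableEq ι]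
    {U : Matrix ι ι 𝕜} (hU : U ∈ unitaryGroup ι 𝕜) : ‖U.trace‖ ≤ Fintype.card ι :=
  calc ‖U.trace‖ ≤ ∑ i, ‖U i i‖ := norm_sum_le _ _
    _ ≤ ∑ _i : ι, (1 : ℝ) := Finset.sum_le_sum fun i _ => entry_norm_bound_of_unitary hU i i
    _ = Fintype.card ι := by simp

section SpecialOrthogonal

variable {n : ℕ}

lemma abs_trace_mat_le (A : SO n) : |(mat A).trace| ≤ n := by
  simpa [mat] using norm_trace_le_of_mem_unitaryGroup (A : orthogonalGroup (Fin n) ℝ).2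

lemma trace_mat_one : (mat (1 : SO n)).trace = n := by
  simp [mat]

lemma continuous_trace_mat : Continuous fun A : SO n => (mat A).trace := by
  unfold mat
  fun_prop

lemma measure_trace_mat_gt_pos (μ : Measure (SO n)) [μ.IsOpenPosMeasure] {ε : ℝ} (hε : 0 < ε) :
    0 < μ {A | n - ε < (mat A).trace} :=
  (isOpen_lt continuous_const continuous_trace_mat).measure_pos μ
    ⟨1, by simpa [trace_mat_one] using hε⟩

end SpecialOrthogonal

/-- With `c₁(κ) = (1/n)⟨Tr A⟩_{exp(κ Tr A)}` defined via normalized-Haar-measure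
averages over `SO(n,ℝ)`, one has `c₁(κ) → 1` as `κ → ∞`. -/
theorem stmt_4 (n : ℕ) (hn : 3 ≤ n) (μ : Measure (SO n))
    [IsProbabilityMeasure μ] [μ.IsHaarMeasure]
    (c1 : ℝ → ℝ)
    (hc1 : ∀ κ : ℝ, c1 κ = (n : ℝ)⁻¹ *
        ((∫ A, (mat A).trace * Real.exp (κ * (mat A).trace) ∂μ) /
         (∫ A, Real.exp (κ * (mat A).trace) ∂μ))) :
    Filter.Tendsto c1 Filter.atTop (nhds 1) := by
  have hn₀ : (n : ℝ) ≠ 0 := Nat.cast_ne_zero.2 (by omega)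
  have hmean : Tendsto (gibbsMean μ fun A => (mat A).trace) atTop (𝓝 n) :=
    tendsto_gibbsMean_atTop continuous_trace_mat.measurable abs_trace_mat_le
      (fun A => (abs_le.1 (abs_trace_mat_le A)).2) fun _ => measure_trace_mat_gt_pos μ
  rw [funext hc1, ← inv_mul_cancel₀ hn₀]
  exact hmean.const_mul _
end
end

section
/- Let F : M_n(ℝ)² → ℝ be odd with respect to its first argument and let g : SO(n,ℝ) → ℝ be invariant by transposition. Then for any Θ ∈ SO(n,ℝ), ∫_{SO(n,ℝ)} F(P_{T_Θ}A, P_{T_Θ^⊥}A) g(AΘ^T) dA = 0, where P_{T_Θ}A = ((AΘ^T − ΘA^T)/2)Θ and P_{T_Θ^⊥}A = ((AΘ^T + ΘA^T)/2)Θ. -/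
open MeasureTheory Matrix

noncomputable section

/-- The projection of `A` onto the tangent space to `SO(n,ℝ)` at `Θ`:
`P_{T_Θ} A = ((AΘᵀ − ΘAᵀ)/2) Θ`. -/
def PT {n : ℕ} (Θ A : Matrix (Fin n) (Fin n) ℝ) : Matrix (Fin n) (Fin n) ℝ :=
  ((2 : ℝ)⁻¹ • (A * Θᵀ - Θ * Aᵀ)) * Θ

/-- The projection of `A` onto the orthogonal complement of the tangent space:
`P_{T_Θ^⊥} A = ((AΘᵀ + ΘAᵀ)/2) Θ`. -/
def PTperp {n : ℕ} (Θ A : Matrix (Fin n) (Fin n) ℝ) : Matrix (Fin n) (Fin n) ℝ :=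
  ((2 : ℝ)⁻¹ • (A * Θᵀ + Θ * Aᵀ)) * Θ

/-!
The change of variables `A' = Θ Aᵀ Θ`, i.e. `ψ A = Θ * A⁻¹ * Θ`, is an involution of `SO(n)` that
preserves Haar measure: on a compact group the Haar probability measure is the only left-invariant
probability measure, so it is also right- and inversion-invariant. Under `ψ`, `AΘᵀ` becomes its
transpose `ΘAᵀ`, so `g(AΘᵀ)` and `P_{T_Θ^⊥}A` are unchanged while `P_{T_Θ}A` changes sign. The
integrand is therefore odd under a measure-preserving map, and its integral vanishes.
-/

namespace MeasureTheory.Measure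

section CompactGroup

variable {G : Type*} [Group G] [TopologicalSpace G] [IsTopologicalGroup G] [MeasurableSpace G]
  [BorelSpace G] [CompactSpace G] (μ : Measure G) [IsHaarMeasure μ] [IsProbabilityMeasure μ]

theorem IsHaarMeasure.eq_of_isMulLeftInvariant_of_isProbabilityMeasure (ν : Measure G)
    [ν.IsMulLeftInvariant] [IsProbabilityMeasure ν] : ν = μ := by
  have hν := ν.isMulInvariant_eq_smul_of_compactSpace μ
  have hc : ν.haarScalarFactor μ = 1 := by
    have h := congrArg (· Set.univ) hν
    simp only [measure_univ, Measure.smul_apply, ENNReal.smul_def, smul_eq_mul, mul_one] at h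
    exact_mod_cast h.symm
  rw [hν, hc, one_smul]

theorem IsHaarMeasure.isMulRightInvariant_of_compactSpace : μ.IsMulRightInvariant where
  map_mul_right_eq_self h := by
    have := isProbabilityMeasure_map (μ := μ) (measurable_mul_const h).aemeasurable
    exact eq_of_isMulLeftInvariant_of_isProbabilityMeasure μ _

theorem IsHaarMeasure.isInvInvariant_of_compactSpace : μ.IsInvInvariant where
  inv_eq_self := by
    have := isMulRightInvariant_of_compactSpace μ
    have : IsProbabilityMeasure μ.inv := isProbabilityMeasure_map measurable_inv.aemeasurable
    exact eq_of_isMulLeftInvariant_of_isProbabilityMeasure μ _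

theorem IsHaarMeasure.measurePreserving_mul_inv_mul (a b : G) :
    MeasurePreserving (fun x => a * x⁻¹ * b) μ μ := by
  have := isMulRightInvariant_of_compactSpace μ
  have := isInvInvariant_of_compactSpace μ
  exact (measurePreserving_mul_right μ b).comp
    ((measurePreserving_mul_left μ a).comp (measurePreserving_inv μ))

end CompactGroup

end MeasureTheory.Measure

theorem measurableEmbedding_mul_inv_mul {G : Type*} [Group G] [MeasurableSpace G]
    [MeasurableMul G] [MeasurableInv G] (a b : G) :
    MeasurableEmbedding (fun x : G => a * x⁻¹ * b) :=
  (measurableEmbedding_mulRight b).comp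
    ((measurableEmbedding_mulLeft a).comp measurableEmbedding_inv)

theorem integral_eq_zero_of_comp_eq_neg {α E : Type*} [MeasurableSpace α] [NormedAddCommGroup E]
    [NormedSpace ℝ E] {μ : Measure α} {e : α → α} (he : MeasurePreserving e μ μ)
    (he' : MeasurableEmbedding e) {f : α → E} (hf : ∀ x, f (e x) = -f x) :
    ∫ x, f x ∂μ = 0 := by
  have h := he.integral_comp he' f
  simp only [hf, integral_neg] at h
  have h2 : (2 : ℝ) • ∫ x, f x ∂μ = 0 := by
    rw [two_smul]
    nth_rewrite 1 [← h]
    exact neg_add_cancel _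
  exact (smul_eq_zero.mp h2).resolve_left two_ne_zero

instance (n : ℕ) : BorelSpace (Matrix (Fin n) (Fin n) ℝ) := Pi.borelSpace

instance (n : ℕ) : CompactSpace (Matrix.orthogonalGroup (Fin n) ℝ) := by
  refine isCompact_iff_compactSpace.mp <|
    (isCompact_univ_pi fun _ => isCompact_univ_pi fun _ => isCompact_closedBall (0 : ℝ) 1)
      |>.of_isClosed_subset (isClosed_unitary (R := Matrix (Fin n) (Fin n) ℝ)) fun U hU => ?_
  simpa [Set.mem_univ_pi] using entry_norm_bound_of_unitary hU

instance (n : ℕ) : CompactSpace (SO n) := by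
  have hclosed : IsClosed (SOsub n : Set (Matrix.orthogonalGroup (Fin n) ℝ)) :=
    isClosed_singleton.preimage (continuous_subtype_val.matrix_det)
  exact isCompact_iff_compactSpace.mp hclosed.isCompact

section Orthogonal

variable {ι R : Type*} [Fintype ι] [DecidableEq ι] [CommRing R] {T : Matrix ι ι R}

lemma mul_transpose_mul_mul_transpose (hT : T * Tᵀ = 1) (M : Matrix ι ι R) :
    T * Mᵀ * T * Tᵀ = T * Mᵀ := by
  rw [Matrix.mul_assoc (T * Mᵀ), hT, Matrix.mul_one]

lemma mul_transpose_mul_transpose_mul (hT : T * Tᵀ = 1) (M : Matrix ι ι R) :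
    T * (T * Mᵀ * T)ᵀ = M * Tᵀ := by
  rw [transpose_mul, transpose_mul, transpose_transpose, ← Matrix.mul_assoc, hT, Matrix.one_mul]

end Orthogonal

section Projections

variable {n : ℕ} {T : Matrix (Fin n) (Fin n) ℝ}

lemma PT_mul_transpose_mul (hT : T * Tᵀ = 1) (M : Matrix (Fin n) (Fin n) ℝ) :
    PT T (T * Mᵀ * T) = -PT T M := by
  rw [PT, PT, mul_transpose_mul_mul_transpose hT, mul_transpose_mul_transpose_mul hT, ← neg_mul,
    ← smul_neg, neg_sub]

lemma PTperp_mul_transpose_mul (hT : T * Tᵀ = 1) (M : Matrix (Fin n) (Fin n) ℝ) :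
    PTperp T (T * Mᵀ * T) = PTperp T M := by
  rw [PTperp, PTperp, mul_transpose_mul_mul_transpose hT, mul_transpose_mul_transpose_mul hT,
    add_comm]

end Projections

lemma mat_mul {n : ℕ} (A B : SO n) : mat (A * B) = mat A * mat B := rfl

lemma mat_inv {n : ℕ} (A : SO n) : mat A⁻¹ = (mat A)ᵀ :=
  conjTranspose_eq_transpose_of_trivial _

lemma mat_mul_transpose {n : ℕ} (A : SO n) : mat A * (mat A)ᵀ = 1 := by
  rw [← mat_inv, ← mat_mul, mul_inv_cancel]
  rfl

theorem stmt_7_general (n : ℕ) (μ : Measure (SO n))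
    [IsProbabilityMeasure μ] [μ.IsHaarMeasure]
    (F : Matrix (Fin n) (Fin n) ℝ → Matrix (Fin n) (Fin n) ℝ → ℝ)
    (hodd : ∀ P Q, F (-P) Q = -F P Q)
    (g : SO n → ℝ)
    (htrans : ∀ A B : SO n, mat B = (mat A)ᵀ → g B = g A)
    (Θ : SO n) :
    ∫ A, F (PT (mat Θ) (mat A)) (PTperp (mat Θ) (mat A)) * g (A * Θ⁻¹) ∂μ = 0 := by
  have hΘ := mat_mul_transpose Θ
  refine integral_eq_zero_of_comp_eq_neg
    (Measure.IsHaarMeasure.measurePreserving_mul_inv_mul μ Θ Θ)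
    (measurableEmbedding_mul_inv_mul Θ Θ) fun A => ?_
  have hmat : mat (Θ * A⁻¹ * Θ) = mat Θ * (mat A)ᵀ * mat Θ := by rw [mat_mul, mat_mul, mat_inv]
  have hg : g (Θ * A⁻¹ * Θ * Θ⁻¹) = g (A * Θ⁻¹) := by
    refine htrans _ _ ?_
    rw [mul_inv_cancel_right, mat_mul, mat_mul, mat_inv, mat_inv, transpose_mul,
      transpose_transpose]
  simp only [hmat, hg, PT_mul_transpose_mul hΘ, PTperp_mul_transpose_mul hΘ, hodd, neg_mul]

/-- If `F` is odd with respect to its first argument and `g` is invariant by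
transposition, then `∫ F(P_{T_Θ}A, P_{T_Θ^⊥}A) g(AΘᵀ) dA = 0` (note that
`AΘᵀ = A * Θ⁻¹` in `SO(n,ℝ)`). -/
theorem stmt_7 (n : ℕ) (hn : 3 ≤ n) (μ : Measure (SO n))
    [IsProbabilityMeasure μ] [μ.IsHaarMeasure]
    (F : Matrix (Fin n) (Fin n) ℝ → Matrix (Fin n) (Fin n) ℝ → ℝ)
    (hodd : ∀ P Q, F (-P) Q = -F P Q)
    (g : SO n → ℝ)
    (htrans : ∀ A B : SO n, mat B = (mat A)ᵀ → g B = g A)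
    (Θ : SO n) :
    ∫ A, F (PT (mat Θ) (mat A)) (PTperp (mat Θ) (mat A)) * g (A * Θ⁻¹) ∂μ = 0 :=
  stmt_7_general n μ F hodd g htrans Θ
end
end
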